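/- arXiv:1304.3355 — 2 statements merged into one kernel-verified Lean document; each statement's English description precedes it below -/
import Mathlib

section
/- Let C ≥ 0. For every ε > 0 there exist A ≥ 1 and M ∈ [0, A/2] with the following property: for every a ≥ A and every function u, continuous on the closure of Ω_a and twice continuously differentiable in Ω_a, such that u = 0 on the boundary of Ω_a, 0 ≤ u ≤ 1 on Ω_a \ ((−C,C)×(−1,1)), and Δu + 1 = 0 in Ω_a \ ([−C,C]×[−1,1]), one has |u(x,y) − (1−y²)/2| ≤ ε for every (x,y) in the closure of Ω_a belonging to ([−a+M,−M] ∪ [M,a−M]) × [−1,1]. -/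
open Set Metric MeasureTheory

/-- The stadium-like convex domain `Ω_a`. -/
def stadium (φ : ℝ → ℝ) (a : ℝ) : Set (ℝ × ℝ) :=
  {p : ℝ × ℝ | -a - φ p.2 < p.1 ∧ p.1 < a + φ p.2 ∧ -1 < p.2 ∧ p.2 < 1}

/-- The Laplacian of a function on `ℝ × ℝ`: sum of the two second partial derivatives. -/
noncomputable def lap2 (u : ℝ × ℝ → ℝ) (p : ℝ × ℝ) : ℝ :=
  deriv (fun t => deriv (fun s => u (s, p.2)) t) p.1 +
  deriv (fun t => deriv (fun s => u (p.1, s)) t) p.2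

/-!
On the part `x > C` of `Ω_a`, both `u` and the profile `g(y) = (1 - y²)/2` satisfy `Δ = -1`,
while `w(x, y) = (cos 1)⁻¹ (e^{C-x} + e^{x-a}) cos y` is harmonic and positive for `|y| ≤ 1`.
On the boundary of that region `|u - g| ≤ w`: on the segment `x = C` and on the lateral side
`x ≥ a` one has `w ≥ 1` while `u, g ∈ [0, 1]`, and on `y = ±1` both `u` and `g` vanish. The
comparison principle propagates `g - w ≤ u ≤ g + w` inside, and `w ≤ ε` once `x` stays a distance
`L(ε)` away from both `C` and `a`. The left half follows by the reflection `x ↦ -x`.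
-/

open Filter Topology

section OneVariable

variable {f g : ℝ → ℝ} {t : ℝ}

theorem ContDiffAt.differentiableAt_deriv (hf : ContDiffAt ℝ 2 f t) :
    DifferentiableAt ℝ (deriv f) t := by
  obtain ⟨V, hV, hfV⟩ := hf.contDiffOn le_rfl (by simp)
  have hderiv : ContDiffOn ℝ 1 (deriv f) (interior V) :=
    (hfV.mono interior_subset).deriv_of_isOpen isOpen_interior (by norm_num)
  exact (hderiv.differentiableOn one_ne_zero).differentiableAt
    (isOpen_interior.mem_nhds (mem_interior_iff_mem_nhds.2 hV))

theorem ContDiffAt.eventually_differentiableAt (hf : ContDiffAt ℝ 2 f t) :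
    ∀ᶠ s in 𝓝 t, DifferentiableAt ℝ f s :=
  (hf.eventually (by simp)).mono fun _ hs => hs.differentiableAt (by norm_num)

theorem deriv_deriv_add (hf : ContDiffAt ℝ 2 f t) (hg : ContDiffAt ℝ 2 g t) :
    deriv (deriv (f + g)) t = deriv (deriv f) t + deriv (deriv g) t := by
  have hderiv : deriv (f + g) =ᶠ[𝓝 t] deriv f + deriv g := by
    filter_upwards [hf.eventually_differentiableAt, hg.eventually_differentiableAt]
      with s hfs hgs
    exact deriv_add hfs hgs
  rw [hderiv.deriv_eq]
  exact deriv_add hf.differentiableAt_deriv hg.differentiableAt_deriv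

theorem deriv_deriv_neg : deriv (deriv (-f)) t = -deriv (deriv f) t := by
  rw [show deriv (-f) = -deriv f from funext fun s => deriv.neg]
  exact deriv.neg

theorem IsLocalMax.deriv_deriv_nonpos (hmax : IsLocalMax f t) (hf : ContinuousAt f t) :
    deriv (deriv f) t ≤ 0 := by
  by_contra! hpos
  have hmin : IsLocalMin f t := isLocalMin_of_deriv_deriv_pos hpos hmax.deriv_eq_zero hf
  have hconst : deriv f =ᶠ[𝓝 t] fun _ => 0 := by
    have : f =ᶠ[𝓝 t] fun _ => f t := by
      filter_upwards [hmin, hmax] with s h₁ h₂ using le_antisymm h₂ h₁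
    filter_upwards [this.eventuallyEq_nhds] with s hs
    rw [hs.deriv_eq, deriv_const]
  rw [hconst.deriv_eq, deriv_const] at hpos
  exact lt_irrefl 0 hpos

end OneVariable

section Laplacian

variable {u v : ℝ × ℝ → ℝ} {p : ℝ × ℝ}

theorem ContDiffAt.slice_fst (hu : ContDiffAt ℝ 2 u p) :
    ContDiffAt ℝ 2 (fun s => u (s, p.2)) p.1 :=
  hu.comp p.1 (contDiffAt_id.prodMk contDiffAt_const)

theorem ContDiffAt.slice_snd (hu : ContDiffAt ℝ 2 u p) :
    ContDiffAt ℝ 2 (fun s => u (p.1, s)) p.2 :=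
  hu.comp p.2 (contDiffAt_const.prodMk contDiffAt_id)

theorem lap2_add (hu : ContDiffAt ℝ 2 u p) (hv : ContDiffAt ℝ 2 v p) :
    lap2 (u + v) p = lap2 u p + lap2 v p := by
  have hx := deriv_deriv_add hu.slice_fst hv.slice_fst
  have hy := deriv_deriv_add hu.slice_snd hv.slice_snd
  simp only [lap2] at *
  rw [show (fun s => (u + v) (s, p.2)) = (fun s => u (s, p.2)) + fun s => v (s, p.2) from rfl,
    show (fun s => (u + v) (p.1, s)) = (fun s => u (p.1, s)) + fun s => v (p.1, s) from rfl,
    hx, hy]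
  ring

theorem lap2_neg : lap2 (-u) p = -lap2 u p := by
  have hx := deriv_deriv_neg (f := fun s => u (s, p.2)) (t := p.1)
  have hy := deriv_deriv_neg (f := fun s => u (p.1, s)) (t := p.2)
  simp only [lap2] at *
  rw [show (fun s => (-u) (s, p.2)) = -fun s => u (s, p.2) from rfl,
    show (fun s => (-u) (p.1, s)) = -fun s => u (p.1, s) from rfl, hx, hy]
  ring

theorem lap2_sub (hu : ContDiffAt ℝ 2 u p) (hv : ContDiffAt ℝ 2 v p) :
    lap2 (u - v) p = lap2 u p - lap2 v p := by
  rw [sub_eq_add_neg, lap2_add (v := -v) hu hv.neg, lap2_neg, sub_eq_add_neg]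

theorem IsLocalMax.lap2_nonpos (hmax : IsLocalMax u p) (hu : ContinuousAt u p) :
    lap2 u p ≤ 0 := by
  have hfst : ContinuousAt (fun s : ℝ => (s, p.2)) p.1 := by fun_prop
  have hsnd : ContinuousAt (fun s : ℝ => (p.1, s)) p.2 := by fun_prop
  have hx : deriv (deriv fun s => u (s, p.2)) p.1 ≤ 0 :=
    (hmax.comp_continuous hfst).deriv_deriv_nonpos (hu.comp hfst)
  have hy : deriv (deriv fun s => u (p.1, s)) p.2 ≤ 0 :=
    (hmax.comp_continuous hsnd).deriv_deriv_nonpos (hu.comp hsnd)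
  exact add_nonpos hx hy

theorem lap2_fst_mul_snd (f g : ℝ → ℝ) (p : ℝ × ℝ) :
    lap2 (fun q => f q.1 * g q.2) p =
      deriv (deriv f) p.1 * g p.2 + f p.1 * deriv (deriv g) p.2 := by
  simp only [lap2, deriv_mul_const_field, deriv_const_mul_field]

theorem lap2_comp_snd (g : ℝ → ℝ) (p : ℝ × ℝ) :
    lap2 (fun q => g q.2) p = deriv (deriv g) p.2 := by
  simp [lap2]

theorem lap2_comp_fst (f : ℝ → ℝ) (p : ℝ × ℝ) :
    lap2 (fun q => f q.1) p = deriv (deriv f) p.1 := by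
  simp [lap2]

theorem lap2_comp_neg_fst (u : ℝ × ℝ → ℝ) (p : ℝ × ℝ) :
    lap2 (fun q => u (-q.1, q.2)) p = lap2 u (-p.1, p.2) := by
  have hderiv : deriv (fun s => u (-s, p.2)) = fun s => -deriv (fun s => u (s, p.2)) (-s) :=
    funext fun s => deriv_comp_neg (fun s => u (s, p.2)) s
  simp only [lap2, hderiv, deriv.fun_neg, deriv_comp_neg, neg_neg]

theorem lap2_parabola (p : ℝ × ℝ) : lap2 (fun q => (1 - q.2 ^ 2) / 2) p = -1 := by
  have hderiv : deriv (fun y : ℝ => (1 - y ^ 2) / 2) = fun y => -y :=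
    funext fun y => (((hasDerivAt_pow 2 y).const_sub 1).div_const 2).deriv.trans (by ring)
  rw [lap2_comp_snd (fun y => (1 - y ^ 2) / 2), hderiv]
  simp

end Laplacian

section MaximumPrinciple

variable {U : Set (ℝ × ℝ)}

theorem exists_mem_frontier_isMaxOn_of_lap2_pos (hU : IsOpen U) (hb : Bornology.IsBounded U)
    (hne : U.Nonempty) {h : ℝ × ℝ → ℝ} (hc : ContinuousOn h (closure U))
    (hlap : ∀ p ∈ U, 0 < lap2 h p) : ∃ p₀ ∈ frontier U, IsMaxOn h (closure U) p₀ := by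
  obtain ⟨p₀, hp₀, hmax⟩ := hb.isCompact_closure.exists_isMaxOn hne.closure hc
  refine ⟨p₀, ?_, hmax⟩
  rw [hU.frontier_eq]
  refine ⟨hp₀, fun hp₀U => (hlap p₀ hp₀U).not_ge ?_⟩
  have hnhds : closure U ∈ 𝓝 p₀ := mem_of_superset (hU.mem_nhds hp₀U) subset_closure
  exact (hmax.isLocalMax hnhds).lap2_nonpos (hc.continuousAt hnhds)

theorem weak_maximum_principle (hU : IsOpen U) (hb : Bornology.IsBounded U)
    {h : ℝ × ℝ → ℝ} (hc : ContinuousOn h (closure U)) (hd : ContDiffOn ℝ 2 h U)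
    (hlap : ∀ p ∈ U, 0 ≤ lap2 h p) (hfr : ∀ p ∈ frontier U, h p ≤ 0) :
    ∀ p ∈ closure U, h p ≤ 0 := by
  intro p hp
  obtain ⟨R, hR⟩ := hb.isCompact_closure.bddAbove_image
    (f := fun q : ℝ × ℝ => q.1 ^ 2) (by fun_prop)
  have hR0 : 0 ≤ R := (sq_nonneg p.1).trans (hR ⟨p, hp, rfl⟩)
  refine le_of_forall_pos_le_add fun ε hε => ?_
  set δ := ε / (R + 1)
  have hδ : 0 < δ := by positivity
  -- the perturbation makes the Laplacian strictly positive, so `H` peaks on the frontier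
  set H : ℝ × ℝ → ℝ := h + fun q => δ * q.1 ^ 2
  have hHlap : ∀ q ∈ U, 0 < lap2 H q := by
    intro q hq
    rw [lap2_add (hd.contDiffAt (hU.mem_nhds hq)) (by fun_prop),
      lap2_comp_fst (fun s => δ * s ^ 2)]
    have : deriv (deriv fun s : ℝ => δ * s ^ 2) q.1 = δ * 2 := by simp
    linarith [hlap q hq]
  obtain ⟨q₀, hq₀, hmax⟩ := exists_mem_frontier_isMaxOn_of_lap2_pos hU hb
    (closure_nonempty_iff.1 ⟨p, hp⟩) (hc.add (by fun_prop)) hHlap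
  have hq₀R : q₀.1 ^ 2 ≤ R := hR ⟨q₀, frontier_subset_closure hq₀, rfl⟩
  calc h p ≤ H p := le_add_of_nonneg_right (by positivity)
    _ ≤ H q₀ := hmax hp
    _ = h q₀ + δ * q₀.1 ^ 2 := rfl
    _ ≤ 0 + δ * (R + 1) := by gcongr; exacts [hfr q₀ hq₀, by linarith]
    _ = 0 + ε := by rw [div_mul_cancel₀ ε (by positivity)]

theorem comparison_principle (hU : IsOpen U) (hb : Bornology.IsBounded U) {u v : ℝ × ℝ → ℝ}
    (huc : ContinuousOn u (closure U)) (hvc : ContinuousOn v (closure U))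
    (hud : ContDiffOn ℝ 2 u U) (hvd : ContDiffOn ℝ 2 v U)
    (hlap : ∀ p ∈ U, lap2 v p ≤ lap2 u p) (hfr : ∀ p ∈ frontier U, u p ≤ v p) :
    ∀ p ∈ closure U, u p ≤ v p := by
  intro p hp
  refine sub_nonpos.1 (weak_maximum_principle hU hb (huc.sub hvc) (hud.sub hvd) ?_ ?_ p hp)
  · intro q hq
    rw [lap2_sub (hud.contDiffAt (hU.mem_nhds hq)) (hvd.contDiffAt (hU.mem_nhds hq))]
    exact sub_nonneg.2 (hlap q hq)
  · exact fun q hq => sub_nonpos.2 (hfr q hq)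

end MaximumPrinciple

section Stadium

variable {φ : ℝ → ℝ} {a : ℝ}

theorem stadium_congr {ψ : ℝ → ℝ} (h : ∀ y ∈ Ioo (-1 : ℝ) 1, φ y = ψ y) :
    stadium φ a = stadium ψ a := by
  ext p
  constructor <;> rintro ⟨h₁, h₂, h₃, h₄⟩
  · rw [h p.2 ⟨h₃, h₄⟩] at h₁ h₂
    exact ⟨h₁, h₂, h₃, h₄⟩
  · rw [← h p.2 ⟨h₃, h₄⟩] at h₁ h₂
    exact ⟨h₁, h₂, h₃, h₄⟩

theorem isOpen_stadium (hφ : Continuous φ) : IsOpen (stadium φ a) :=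
  (isOpen_lt (by fun_prop) continuous_fst).inter <|
    (isOpen_lt continuous_fst (by fun_prop)).inter <|
      (isOpen_lt continuous_const continuous_snd).inter (isOpen_lt continuous_snd continuous_const)

theorem closure_stadium_subset (hφ : Continuous φ) :
    closure (stadium φ a) ⊆
      {p | -a - φ p.2 ≤ p.1 ∧ p.1 ≤ a + φ p.2 ∧ -1 ≤ p.2 ∧ p.2 ≤ 1} :=
  closure_minimal (fun _ ⟨h₁, h₂, h₃, h₄⟩ => ⟨h₁.le, h₂.le, h₃.le, h₄.le⟩) <|
    (isClosed_le (by fun_prop) continuous_fst).inter <|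
      (isClosed_le continuous_fst (by fun_prop)).inter <|
        (isClosed_le continuous_const continuous_snd).inter
          (isClosed_le continuous_snd continuous_const)

theorem isBounded_stadium (hφ : ContinuousOn φ (Icc (-1) 1)) :
    Bornology.IsBounded (stadium φ a) := by
  obtain ⟨B, hB⟩ := (isCompact_Icc.image_of_continuousOn hφ).bddAbove
  refine ((isBounded_Icc (-(a + B)) (a + B)).prod (isBounded_Icc (-1) 1)).subset ?_
  rintro p ⟨h₁, h₂, h₃, h₄⟩
  have hφB : φ p.2 ≤ B := hB ⟨p.2, ⟨h₃.le, h₄.le⟩, rfl⟩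
  exact ⟨⟨by linarith, by linarith⟩, h₃.le, h₄.le⟩

theorem neg_fst_mem_stadium_iff {p : ℝ × ℝ} : (-p.1, p.2) ∈ stadium φ a ↔ p ∈ stadium φ a := by
  constructor <;> rintro ⟨h₁, h₂, h₃, h₄⟩ <;> exact ⟨by linarith, by linarith, h₃, h₄⟩

noncomputable def negFst : ℝ × ℝ ≃ₜ ℝ × ℝ := (Homeomorph.neg ℝ).prodCongr (Homeomorph.refl ℝ)

@[simp]
theorem negFst_apply (p : ℝ × ℝ) : negFst p = (-p.1, p.2) := rfl

theorem preimage_negFst_stadium : negFst ⁻¹' stadium φ a = stadium φ a :=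
  ext fun _ => neg_fst_mem_stadium_iff

theorem exists_continuous_nonneg_stadium_eq (hφc : ContinuousOn φ (Icc (-1) 1))
    (hφ0 : ∀ y ∈ Icc (-1 : ℝ) 1, 0 ≤ φ y) :
    ∃ ψ : ℝ → ℝ, Continuous ψ ∧ (∀ y, 0 ≤ ψ y) ∧ ∀ a, stadium φ a = stadium ψ a := by
  have h : (-1 : ℝ) ≤ 1 := by norm_num
  set f := (Icc (-1) 1).domRestrict φ
  exact ⟨IccExtend h f, continuous_IccExtend_iff.2 hφc.domRestrict,
    fun y => hφ0 _ (projIcc (-1) 1 h y).2,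
    fun a => stadium_congr fun y hy => (IccExtend_of_mem h f (Ioo_subset_Icc_self hy)).symm⟩

end Stadium

section Barrier

open Real

variable {C a : ℝ}

noncomputable def barrierProfile (C a x : ℝ) : ℝ := (cos 1)⁻¹ * (exp (C - x) + exp (x - a))

noncomputable def barrier (C a : ℝ) (p : ℝ × ℝ) : ℝ := barrierProfile C a p.1 * cos p.2

theorem barrierProfile_pos (x : ℝ) : 0 < barrierProfile C a x := by
  have := cos_one_pos
  unfold barrierProfile
  positivity

theorem deriv_deriv_barrierProfile (x : ℝ) :
    deriv (deriv (barrierProfile C a)) x = barrierProfile C a x := by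
  have he₁ (x : ℝ) : HasDerivAt (fun x => exp (C - x)) (-exp (C - x)) x := by
    simpa using ((hasDerivAt_id x).const_sub C).exp
  have he₂ (x : ℝ) : HasDerivAt (fun x => exp (x - a)) (exp (x - a)) x := by
    simpa using ((hasDerivAt_id x).sub_const a).exp
  have hderiv : deriv (barrierProfile C a) = fun x => (cos 1)⁻¹ * (-exp (C - x) + exp (x - a)) :=
    funext fun x => (((he₁ x).add (he₂ x)).const_mul _).deriv
  rw [hderiv]
  exact (((he₁ x).neg.add (he₂ x)).const_mul _).deriv.trans (by rw [neg_neg]; rfl)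

theorem lap2_barrier (p : ℝ × ℝ) : lap2 (barrier C a) p = 0 := by
  change lap2 (fun q => barrierProfile C a q.1 * cos q.2) p = 0
  rw [lap2_fst_mul_snd, deriv_deriv_barrierProfile]
  simp

theorem contDiff_barrier : ContDiff ℝ 2 (barrier C a) := by
  unfold barrier barrierProfile
  fun_prop

theorem cos_one_le_cos {y : ℝ} (hy : y ∈ Icc (-1 : ℝ) 1) : cos 1 ≤ cos y := by
  rw [← cos_abs y]
  exact cos_le_cos_of_nonneg_of_le_pi (abs_nonneg y) (by linarith [pi_gt_three])
    (abs_le.2 hy)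

theorem barrier_nonneg {p : ℝ × ℝ} (hy : p.2 ∈ Icc (-1 : ℝ) 1) : 0 ≤ barrier C a p :=
  mul_nonneg (barrierProfile_pos p.1).le (cos_one_pos.trans_le (cos_one_le_cos hy)).le

theorem barrier_le_barrierProfile (p : ℝ × ℝ) : barrier C a p ≤ barrierProfile C a p.1 :=
  mul_le_of_le_one_right (barrierProfile_pos p.1).le (cos_le_one p.2)

theorem one_le_barrier {p : ℝ × ℝ} (hy : p.2 ∈ Icc (-1 : ℝ) 1) (hx : p.1 ≤ C ∨ a ≤ p.1) :
    1 ≤ barrier C a p := by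
  have hexp : 1 ≤ exp (C - p.1) + exp (p.1 - a) := by
    rcases hx with hx | hx
    · linarith [one_le_exp (sub_nonneg.2 hx), exp_pos (p.1 - a)]
    · linarith [one_le_exp (sub_nonneg.2 hx), exp_pos (C - p.1)]
  have hK : 0 ≤ (cos 1)⁻¹ := inv_nonneg.2 cos_one_pos.le
  calc (1 : ℝ) = (cos 1)⁻¹ * 1 * cos 1 := by rw [mul_one, inv_mul_cancel₀ cos_one_pos.ne']
    _ ≤ (cos 1)⁻¹ * (exp (C - p.1) + exp (p.1 - a)) * cos p.2 :=
      mul_le_mul (mul_le_mul_of_nonneg_left hexp hK) (cos_one_le_cos hy) cos_one_pos.le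
        (by positivity)

theorem exists_barrierProfile_le {ε : ℝ} (hε : 0 < ε) (C : ℝ) :
    ∃ L > 0, ∀ a x, C + L ≤ x → x + L ≤ a → barrierProfile C a x ≤ ε := by
  set K := (cos 1)⁻¹
  have hK : 0 < K := inv_pos.2 cos_one_pos
  refine ⟨max 1 (log (2 * K / ε)), by positivity, fun a x hCx hxa => ?_⟩
  have hexp : ∀ t ≤ -max 1 (log (2 * K / ε)), exp t ≤ ε / (2 * K) := by
    intro t ht
    calc exp t ≤ exp (-log (2 * K / ε)) :=
          exp_le_exp.2 (by linarith [le_max_right 1 (log (2 * K / ε))])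
      _ = ε / (2 * K) := by rw [exp_neg, exp_log (by positivity), inv_div]
  calc barrierProfile C a x = K * (exp (C - x) + exp (x - a)) := rfl
    _ ≤ K * (ε / (2 * K) + ε / (2 * K)) := by
      gcongr <;> apply hexp <;> linarith
    _ = ε := by field_simp; ring

end Barrier

section HalfStadium

variable {φ : ℝ → ℝ} {a C : ℝ} {u : ℝ × ℝ → ℝ}

theorem abs_sub_le_barrier_of_mem_frontier (hφ : Continuous φ) (hφ0 : ∀ y, 0 ≤ φ y)
    (hCa : -a < C) (hub : ∀ p ∈ frontier (stadium φ a), u p = 0)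
    (hu01 : ∀ p ∈ stadium φ a, p.1 = C → u p ∈ Icc 0 1) {q : ℝ × ℝ}
    (hq : q ∈ frontier (stadium φ a ∩ {p | C < p.1})) :
    |u q - (1 - q.2 ^ 2) / 2| ≤ barrier C a q := by
  have hΩ := isOpen_stadium hφ (a := a)
  have hHalf : IsOpen {p : ℝ × ℝ | C < p.1} := isOpen_lt continuous_const continuous_fst
  obtain ⟨hqΩ, hqC⟩ : q ∈ closure (stadium φ a) ∧ C ≤ q.1 :=
    (closure_inter_subset_inter_closure _ _ (frontier_subset_closure hq)).imp_right
      fun h => closure_lt_subset_le continuous_const continuous_fst h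
  obtain ⟨h₁, h₂, h₃, h₄⟩ := closure_stadium_subset hφ hqΩ
  have hy : q.2 ∈ Icc (-1 : ℝ) 1 := ⟨h₃, h₄⟩
  have hg : 0 ≤ (1 - q.2 ^ 2) / 2 ∧ (1 - q.2 ^ 2) / 2 ≤ 1 / 2 := by
    constructor <;> nlinarith
  rw [abs_sub_le_iff]
  by_cases hq' : q ∈ stadium φ a
  · have hqx : q.1 = C := by
      rw [(hΩ.inter hHalf).frontier_eq] at hq
      exact le_antisymm (not_lt.1 fun h => hq.2 ⟨hq', h⟩) hqC
    have hw := one_le_barrier (a := a) hy (Or.inl hqx.le)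
    have hu := hu01 q hq' hqx
    constructor <;> linarith [hu.1, hu.2]
  · have hu : u q = 0 := hub q (hΩ.frontier_eq ▸ ⟨hqΩ, hq'⟩)
    by_cases hqa : a ≤ q.1
    · have hw := one_le_barrier (C := C) hy (Or.inr hqa)
      constructor <;> linarith
    · have hedge : q.2 = 1 ∨ q.2 = -1 := by
        by_contra! hne
        exact hq' ⟨by linarith [hφ0 q.2], by linarith [hφ0 q.2],
          lt_of_le_of_ne h₃ hne.2.symm, lt_of_le_of_ne h₄ hne.1⟩
      have hg0 : (1 - q.2 ^ 2) / 2 = 0 := by rcases hedge with h | h <;> simp [h]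
      have hw := barrier_nonneg (C := C) (a := a) hy
      constructor <;> linarith

theorem abs_sub_le_barrier (hφ : Continuous φ) (hφ0 : ∀ y, 0 ≤ φ y) (hCa : -a < C)
    (huc : ContinuousOn u (closure (stadium φ a))) (hud : ContDiffOn ℝ 2 u (stadium φ a))
    (hub : ∀ p ∈ frontier (stadium φ a), u p = 0)
    (hu01 : ∀ p ∈ stadium φ a, p.1 = C → u p ∈ Icc 0 1)
    (hlap : ∀ p ∈ stadium φ a, C < p.1 → lap2 u p = -1)
    {p : ℝ × ℝ} (hp : p ∈ closure (stadium φ a)) (hpC : C < p.1) :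
    |u p - (1 - p.2 ^ 2) / 2| ≤ barrier C a p := by
  set U := stadium φ a ∩ {q | C < q.1}
  have hHalf : IsOpen {q : ℝ × ℝ | C < q.1} := isOpen_lt continuous_const continuous_fst
  have hU : IsOpen U := (isOpen_stadium hφ).inter hHalf
  have hUb : Bornology.IsBounded U := (isBounded_stadium hφ.continuousOn).subset inter_subset_left
  have hpU : p ∈ closure U := hHalf.closure_inter ⟨hp, hpC⟩
  have hucU : ContinuousOn u (closure U) := huc.mono (closure_mono inter_subset_left)
  have hudU : ContDiffOn ℝ 2 u U := hud.mono inter_subset_left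
  have hg : ContDiff ℝ 2 fun q : ℝ × ℝ => (1 - q.2 ^ 2) / 2 := by fun_prop
  have hw : ContDiff ℝ 2 (barrier C a) := contDiff_barrier
  have hfr := fun q (hq : q ∈ frontier U) =>
    abs_sub_le_iff.1 (abs_sub_le_barrier_of_mem_frontier hφ hφ0 hCa hub hu01 hq)
  have hlapU : ∀ q ∈ U, lap2 u q = -1 := fun q hq => hlap q hq.1 hq.2
  have hupper : u p ≤ (1 - p.2 ^ 2) / 2 + barrier C a p :=
    comparison_principle (v := (fun q => (1 - q.2 ^ 2) / 2) + barrier C a) hU hUb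
      hucU (hg.add hw).continuous.continuousOn hudU (hg.add hw).contDiffOn
      (fun q hq => by
        rw [lap2_add hg.contDiffAt hw.contDiffAt, lap2_parabola, lap2_barrier, hlapU q hq]
        norm_num)
      (fun q hq => show u q ≤ _ + _ by linarith [(hfr q hq).1]) p hpU
  have hlower : (1 - p.2 ^ 2) / 2 - barrier C a p ≤ u p :=
    comparison_principle (u := (fun q => (1 - q.2 ^ 2) / 2) - barrier C a) hU hUb
      (hg.sub hw).continuous.continuousOn hucU (hg.sub hw).contDiffOn hudU
      (fun q hq => by
        rw [lap2_sub hg.contDiffAt hw.contDiffAt, lap2_parabola, lap2_barrier, hlapU q hq]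
        norm_num)
      (fun q hq => show _ - _ ≤ u q by linarith [(hfr q hq).2]) p hpU
  exact abs_sub_le_iff.2 ⟨by linarith, by linarith⟩

theorem abs_sub_le_barrierProfile (hφ : Continuous φ) (hφ0 : ∀ y, 0 ≤ φ y) (hCa : -a < C)
    (huc : ContinuousOn u (closure (stadium φ a))) (hud : ContDiffOn ℝ 2 u (stadium φ a))
    (hub : ∀ p ∈ frontier (stadium φ a), u p = 0)
    (hu01 : ∀ p ∈ stadium φ a \ (Ioo (-C) C ×ˢ Ioo (-1 : ℝ) 1), u p ∈ Icc 0 1)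
    (hlap : ∀ p ∈ stadium φ a \ (Icc (-C) C ×ˢ Icc (-1 : ℝ) 1), lap2 u p + 1 = 0)
    {p : ℝ × ℝ} (hp : p ∈ closure (stadium φ a)) (hpC : C < |p.1|) :
    |u p - (1 - p.2 ^ 2) / 2| ≤ barrierProfile C a |p.1| := by
  rcases le_or_gt 0 p.1 with hp0 | hp0
  · rw [abs_of_nonneg hp0] at hpC ⊢
    refine (abs_sub_le_barrier hφ hφ0 hCa huc hud hub (fun q hq hqC => hu01 q ⟨hq, ?_⟩)
      (fun q hq hqC => eq_neg_of_add_eq_zero_left (hlap q ⟨hq, ?_⟩)) hp hpC).trans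
      (barrier_le_barrierProfile p)
    · exact fun h => h.1.2.ne hqC
    · exact fun h => hqC.not_ge h.1.2
  · rw [abs_of_neg hp0] at hpC ⊢
    have hclosure : negFst ⁻¹' closure (stadium φ a) = closure (stadium φ a) := by
      rw [negFst.preimage_closure, preimage_negFst_stadium]
    have hfrontier : negFst ⁻¹' frontier (stadium φ a) = frontier (stadium φ a) := by
      rw [negFst.preimage_frontier, preimage_negFst_stadium]
    have hreflect := abs_sub_le_barrier (u := u ∘ negFst) (p := negFst p) hφ hφ0 hCa
      (huc.comp negFst.continuous.continuousOn hclosure.ge)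
      (hud.comp (contDiff_fst.neg.prodMk contDiff_snd).contDiffOn preimage_negFst_stadium.ge)
      (fun q hq => hub _ (hfrontier.ge hq))
      (fun q hq hqC => hu01 _ ⟨neg_fst_mem_stadium_iff.2 hq, fun h => h.1.1.ne' (by
        rw [negFst_apply, hqC])⟩)
      (fun q hq hqC => by
        rw [show lap2 (u ∘ negFst) q = lap2 u (-q.1, q.2) from lap2_comp_neg_fst u q]
        refine eq_neg_of_add_eq_zero_left (hlap _ ⟨neg_fst_mem_stadium_iff.2 hq, fun h => ?_⟩)
        linarith [h.1.1])
      (hclosure.ge hp) (by rwa [negFst_apply])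
    simpa using hreflect.trans (barrier_le_barrierProfile _)

end HalfStadium

theorem stmt6_general (φ : ℝ → ℝ)
    (hφc : ContinuousOn φ (Set.Icc (-1) 1)) (hφ0 : ∀ y ∈ Set.Icc (-1:ℝ) 1, 0 ≤ φ y)
    (C : ℝ) (hC : 0 ≤ C) :
    ∀ ε > (0:ℝ), ∃ A : ℝ, 1 ≤ A ∧ ∃ M ∈ Set.Icc (0:ℝ) (A / 2),
      ∀ a : ℝ, A ≤ a → ∀ u : ℝ × ℝ → ℝ,
        ContinuousOn u (closure (stadium φ a)) →
        ContDiffOn ℝ 2 u (stadium φ a) →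
        (∀ p ∈ frontier (stadium φ a), u p = 0) →
        (∀ p ∈ stadium φ a \ (Set.Ioo (-C) C ×ˢ Set.Ioo (-1:ℝ) 1), u p ∈ Set.Icc (0:ℝ) 1) →
        (∀ p ∈ stadium φ a \ (Set.Icc (-C) C ×ˢ Set.Icc (-1:ℝ) 1), lap2 u p + 1 = 0) →
        ∀ p ∈ closure (stadium φ a),
          p.1 ∈ Set.Icc (-a + M) (-M) ∪ Set.Icc M (a - M) → p.2 ∈ Set.Icc (-1:ℝ) 1 →
          |u p - (1 - p.2 ^ 2) / 2| ≤ ε := by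
  intro ε hε
  obtain ⟨ψ, hψ, hψ0, hstadium⟩ := exists_continuous_nonneg_stadium_eq hφc hφ0
  obtain ⟨L, hL, hLε⟩ := exists_barrierProfile_le hε C
  refine ⟨2 * (C + L) + 1, by linarith, C + L, ⟨by linarith, by linarith⟩, ?_⟩
  intro a ha u huc hud hub hu01 hlap p hp hpx _
  rw [hstadium a] at huc hud hub hu01 hlap hp
  have hpx' : C + L ≤ |p.1| ∧ |p.1| + L ≤ a := by
    rcases hpx with ⟨h₁, h₂⟩ | ⟨h₁, h₂⟩
    · rw [abs_of_neg (by linarith)]; constructor <;> linarith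
    · rw [abs_of_pos (by linarith)]; constructor <;> linarith
  exact (abs_sub_le_barrierProfile hψ hψ0 (by linarith) huc hud hub hu01 hlap hp
    (by linarith)).trans (hLε a |p.1| hpx'.1 hpx'.2)

theorem stmt6 (φ : ℝ → ℝ)
    (hφc : ContinuousOn φ (Set.Icc (-1) 1)) (hφ0 : ∀ y ∈ Set.Icc (-1:ℝ) 1, 0 ≤ φ y)
    (hφcc : ConcaveOn ℝ (Set.Icc (-1:ℝ) 1) φ) (hφe : ∀ y : ℝ, φ (-y) = φ y)
    (hφm1 : φ (-1) = 0) (hφ1 : φ 1 = 0)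
    (C : ℝ) (hC : 0 ≤ C) :
    ∀ ε > (0:ℝ), ∃ A : ℝ, 1 ≤ A ∧ ∃ M ∈ Set.Icc (0:ℝ) (A / 2),
      ∀ a : ℝ, A ≤ a → ∀ u : ℝ × ℝ → ℝ,
        ContinuousOn u (closure (stadium φ a)) →
        ContDiffOn ℝ 2 u (stadium φ a) →
        (∀ p ∈ frontier (stadium φ a), u p = 0) →
        (∀ p ∈ stadium φ a \ (Set.Ioo (-C) C ×ˢ Set.Ioo (-1:ℝ) 1), u p ∈ Set.Icc (0:ℝ) 1) →
        (∀ p ∈ stadium φ a \ (Set.Icc (-C) C ×ˢ Set.Icc (-1:ℝ) 1), lap2 u p + 1 = 0) →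
        ∀ p ∈ closure (stadium φ a),
          p.1 ∈ Set.Icc (-a + M) (-M) ∪ Set.Icc M (a - M) → p.2 ∈ Set.Icc (-1:ℝ) 1 →
          |u p - (1 - p.2 ^ 2) / 2| ≤ ε :=
  stmt6_general φ hφc hφ0 C hC
end

section
/- Let a ≥ 1 and μ ∈ ℝ. Let u and v be continuous on the closure of Ω_a and twice continuously differentiable in Ω_a, with Δv + 1 = 0 in Ω_a, Δu + 1 + μ·g′(u) = 0 in Ω_a, u = 0 and v = 0 on the boundary of Ω_a, and suppose the maximum of u over the closure of Ω_a is greater than 1. Then μ > 0 and 0 < v(x,y) < u(x,y) for every (x,y) ∈ Ω_a. -/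
open Set Metric MeasureTheory

open Filter Bornology



lemma esq_ball {c x : ℝ×ℝ} {E : ℝ} (h : (x.1 - c.1)^2 + (x.2 - c.2)^2 ≤ E) :
    x ∈ Metric.closedBall c (Real.sqrt E) := by
  have h1 : (x.1 - c.1)^2 ≤ E := by nlinarith [sq_nonneg (x.2 - c.2)]
  have h2 : (x.2 - c.2)^2 ≤ E := by nlinarith [sq_nonneg (x.1 - c.1)]
  have h1' := Real.abs_le_sqrt h1
  have h2' := Real.abs_le_sqrt h2
  rw [Metric.mem_closedBall, Prod.dist_eq]
  simp only [Real.dist_eq]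
  exact max_le h1' h2'

lemma coord_lt {d E : ℝ} (h : d^2 < E^2) (hE : 0 < E) : |d| < E := by
  nlinarith [abs_nonneg d, sq_abs d]

lemma aux_cd2 {f : ℝ → ℝ} {x : ℝ} (hf : ContDiffAt ℝ 2 f x) :
    (∀ᶠ t in nhds x, DifferentiableAt ℝ f t) ∧ DifferentiableAt ℝ (deriv f) x := by
  obtain ⟨u, hu, hfu⟩ := hf.contDiffOn le_rfl (by simp)
  obtain ⟨U, hUu, hUo, hxU⟩ := _root_.mem_nhds_iff.mp hu
  have hfU : ContDiffOn ℝ 2 f U := hfu.mono hUu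
  have h1 : ContDiffOn ℝ 1 (deriv f) U := hfU.deriv_of_isOpen hUo (by norm_num)
  constructor
  · filter_upwards [hUo.mem_nhds hxU] with t ht
    exact ((hfU.differentiableOn (by norm_num)) t ht).differentiableAt (hUo.mem_nhds ht)
  · exact ((h1.differentiableOn (by norm_num)) x hxU).differentiableAt (hUo.mem_nhds hxU)

lemma sd_min {f : ℝ → ℝ} {x : ℝ} (hf : ContDiffAt ℝ 2 f x) (h : IsLocalMin f x) :
    0 ≤ deriv (deriv f) x := by
  by_contra hlt
  push_neg at hlt
  have hd0 : deriv f x = 0 := h.deriv_eq_zero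
  obtain ⟨hev, hdd⟩ := aux_cd2 hf
  have hslope := hasDerivAt_iff_tendsto_slope.mp hdd.hasDerivAt
  have h1 : ∀ᶠ t in nhdsWithin x (Set.Ioi x), slope (deriv f) x t < 0 := by
    have : nhdsWithin x (Set.Ioi x) ≤ nhdsWithin x {x}ᶜ :=
      nhdsWithin_mono x (fun t ht => ne_of_gt ht)
    exact (hslope.mono_left this).eventually (Iio_mem_nhds hlt)
  have h1' : ∀ᶠ t in nhds x, t ∈ Set.Ioi x → slope (deriv f) x t < 0 :=
    eventually_nhdsWithin_iff.mp h1
  have hmin : ∀ᶠ t in nhds x, f x ≤ f t := h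
  obtain ⟨ε, hε, hall⟩ := Metric.eventually_nhds_iff.mp ((h1'.and hev).and hmin)
  set t := x + ε/2 with ht
  have hxt : x < t := by simp [ht]; positivity
  have hmem : ∀ s ∈ Set.Icc x t, dist s x < ε := by
    intro s hs
    have hs2 : s ≤ x + ε/2 := ht ▸ hs.2
    rw [Real.dist_eq, abs_of_nonneg (by linarith [hs.1])]
    linarith
  have hdiff : ∀ s ∈ Set.Icc x t, DifferentiableAt ℝ f s := fun s hs => ((hall (hmem s hs)).1).2
  obtain ⟨c, hc, hceq⟩ := exists_deriv_eq_slope f hxt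
    (fun s hs => (hdiff s hs).continuousAt.continuousWithinAt)
    (fun s hs => (hdiff s (Set.mem_Icc_of_Ioo hs)).differentiableWithinAt)
  have hc1 : deriv f c < 0 := by
    have hsl := ((hall (hmem c (Set.mem_Icc_of_Ioo hc))).1).1 hc.1
    rw [slope_def_field, hd0, sub_zero] at hsl
    have hcx : (0:ℝ) < c - x := sub_pos.mpr hc.1
    rcases div_neg_iff.mp hsl with ⟨h1, h2⟩ | ⟨h1, h2⟩
    · linarith
    · exact h1
  have hc2 : 0 ≤ deriv f c := by
    rw [hceq]
    have := hall (hmem t (Set.right_mem_Icc.mpr hxt.le))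
    have hft : f x ≤ f t := this.2
    apply div_nonneg (by linarith) (by linarith)
  linarith


lemma deriv2_neg {f : ℝ → ℝ} (x : ℝ) :
    deriv (deriv (fun t => -f t)) x = -(deriv (deriv f) x) := by
  have h : deriv (fun s => -f s) = fun t => -(deriv f t) := funext fun t => deriv.neg
  rw [h]; exact deriv.neg

lemma sd_max {f : ℝ → ℝ} {x : ℝ} (hf : ContDiffAt ℝ 2 f x) (h : IsLocalMax f x) :
    deriv (deriv f) x ≤ 0 := by
  have := sd_min hf.neg h.neg
  rw [show (fun t => -f t) = -f from rfl] at this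
  have h2 := deriv2_neg (f := f) x
  rw [show (fun t => -f t) = -f from rfl] at h2
  rw [h2] at this
  linarith

lemma deriv2_add_smul {f g : ℝ → ℝ} {x : ℝ} (hf : ContDiffAt ℝ 2 f x)
    (hg : ContDiffAt ℝ 2 g x) (c : ℝ) :
    deriv (deriv (fun t => f t + c * g t)) x = deriv (deriv f) x + c * deriv (deriv g) x := by
  obtain ⟨hfev, hfd⟩ := aux_cd2 hf
  obtain ⟨hgev, hgd⟩ := aux_cd2 hg
  have hev : deriv (fun s => f s + c * g s) =ᶠ[nhds x]
      (fun t : ℝ => deriv f t + c * deriv g t) := by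
    filter_upwards [hfev, hgev] with t htf htg
    rw [deriv_fun_add htf (htg.const_mul c), deriv_const_mul c htg]
  rw [hev.deriv_eq, deriv_fun_add hfd (hgd.const_mul c), deriv_const_mul c hgd]

lemma deriv2_comb {f g : ℝ→ℝ} {x : ℝ} (hf : ContDiffAt ℝ 2 f x) (hg : ContDiffAt ℝ 2 g x)
    (c₁ c₂ c₃ : ℝ) :
    deriv (deriv (fun t => c₁ * f t + c₂ * g t + c₃)) x
      = c₁ * deriv (deriv f) x + c₂ * deriv (deriv g) x := by
  obtain ⟨hfev, hfd⟩ := aux_cd2 hf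
  obtain ⟨hgev, hgd⟩ := aux_cd2 hg
  have hev : deriv (fun s => c₁ * f s + c₂ * g s + c₃) =ᶠ[nhds x]
      (fun t : ℝ => c₁ * deriv f t + c₂ * deriv g t) := by
    filter_upwards [hfev, hgev] with t htf htg
    rw [deriv_add_const, deriv_fun_add (htf.const_mul c₁) (htg.const_mul c₂),
        deriv_const_mul c₁ htf, deriv_const_mul c₂ htg]
  rw [hev.deriv_eq, deriv_fun_add (hfd.const_mul c₁) (hgd.const_mul c₂),
      deriv_const_mul c₁ hfd, deriv_const_mul c₂ hgd]


lemma slice1_cd {F : ℝ×ℝ→ℝ} {p : ℝ×ℝ} (hF : ContDiffAt ℝ 2 F p) :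
    ContDiffAt ℝ 2 (fun s => F (s, p.2)) p.1 :=
  hF.comp p.1 ((contDiff_id.prodMk contDiff_const).contDiffAt)

lemma slice2_cd {F : ℝ×ℝ→ℝ} {p : ℝ×ℝ} (hF : ContDiffAt ℝ 2 F p) :
    ContDiffAt ℝ 2 (fun s => F (p.1, s)) p.2 :=
  hF.comp p.2 ((contDiff_const.prodMk contDiff_id).contDiffAt)

lemma lap2_add_smul {F G : ℝ×ℝ→ℝ} {p : ℝ×ℝ} (hF : ContDiffAt ℝ 2 F p)
    (hG : ContDiffAt ℝ 2 G p) (c : ℝ) :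
    lap2 (fun q => F q + c * G q) p = lap2 F p + c * lap2 G p := by
  unfold lap2
  rw [deriv2_add_smul (slice1_cd hF) (slice1_cd hG) c,
      deriv2_add_smul (slice2_cd hF) (slice2_cd hG) c]
  ring



lemma deriv2_sq_left (K : ℝ) (x : ℝ) : deriv (deriv (fun s : ℝ => s^2 + K)) x = 2 := by
  have h : deriv (fun s : ℝ => s^2 + K) = fun t : ℝ => 2*t := by
    funext t
    rw [deriv_add_const]
    simp [deriv_pow]
  rw [h]
  simpa using ((hasDerivAt_id x).const_mul (2:ℝ)).deriv

lemma deriv2_sq_right (K : ℝ) (x : ℝ) : deriv (deriv (fun s : ℝ => K + s^2)) x = 2 := by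
  have h : deriv (fun s : ℝ => K + s^2) = fun t : ℝ => 2*t := by
    funext t
    rw [deriv_const_add]
    simp [deriv_pow]
  rw [h]
  simpa using ((hasDerivAt_id x).const_mul (2:ℝ)).deriv

lemma lap2_quad (p : ℝ×ℝ) : lap2 (fun q => q.1^2 + q.2^2) p = 4 := by
  unfold lap2
  rw [deriv2_sq_left (p.2^2) p.1, deriv2_sq_right (p.1^2) p.2]
  norm_num

lemma quad_cd : ContDiff ℝ 2 (fun q : ℝ×ℝ => q.1^2 + q.2^2) := by fun_prop

lemma lap2_barrier_s12 (p : ℝ×ℝ) : lap2 (fun q => (1 - q.2^2)/2) p = -1 := by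
  unfold lap2
  have h1 : deriv (fun t : ℝ => deriv (fun _ : ℝ => (1 - p.2^2)/2) t) p.1 = 0 := by
    simp [deriv_const]
  have h2 : deriv (fun s : ℝ => (1 - s^2)/2) = fun t : ℝ => -t := by
    funext t
    rw [deriv_div_const]
    simp [deriv_const_sub, deriv_pow]
    ring
  rw [h1, h2]
  simp

lemma barrier_cd : ContDiff ℝ 2 (fun q : ℝ×ℝ => (1 - q.2^2)/2) := by
  have : ContDiff ℝ 2 (fun q : ℝ×ℝ => 1 - q.2^2) := by fun_prop
  exact this.div_const 2



lemma hasDeriv_expquad (α c K : ℝ) (x : ℝ) :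
    HasDerivAt (fun s => Real.exp (-(α * ((s - c)^2 + K))))
      (Real.exp (-(α * ((x - c)^2 + K))) * (-(α * (2*(x-c)*1)))) x := by
  have h0 : HasDerivAt (fun s : ℝ => s - c) 1 x := (hasDerivAt_id x).sub_const c
  have h1 : HasDerivAt (fun s : ℝ => (s - c)^2) (2*(x-c)^1*1) x := h0.pow 2
  have h2 : HasDerivAt (fun s : ℝ => (s - c)^2 + K) (2*(x-c)^1*1) x := h1.add_const K
  have h3 : HasDerivAt (fun s : ℝ => α * ((s - c)^2 + K)) (α * (2*(x-c)^1*1)) x := h2.const_mul α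
  have h4 := (h3.neg).exp
  simpa using h4

lemma deriv_expquad (α c K : ℝ) :
    deriv (fun s => Real.exp (-(α * ((s - c)^2 + K))))
      = fun x => Real.exp (-(α * ((x - c)^2 + K))) * (-(α * (2*(x-c)*1))) :=
  funext fun x => (hasDeriv_expquad α c K x).deriv

lemma deriv2_expquad (α c K : ℝ) (x : ℝ) :
    deriv (deriv (fun s => Real.exp (-(α * ((s - c)^2 + K))))) x
      = Real.exp (-(α * ((x - c)^2 + K))) * (4*α^2*(x-c)^2 - 2*α) := by
  rw [deriv_expquad]
  have h1 := hasDeriv_expquad α c K x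
  have h2 : HasDerivAt (fun s : ℝ => -(α * (2*(s-c)*1))) (-(α * 2)) x := by
    have h0 : HasDerivAt (fun s : ℝ => s - c) 1 x := (hasDerivAt_id x).sub_const c
    have := ((h0.const_mul 2).mul_const 1).const_mul α
    simpa [Pi.neg_def] using this.neg
  have h3 := h1.mul h2
  exact h3.deriv.trans (by ring)

lemma hasDeriv_expquad' (α c K : ℝ) (x : ℝ) :
    HasDerivAt (fun s => Real.exp (-(α * (K + (s - c)^2))))
      (Real.exp (-(α * (K + (x - c)^2))) * (-(α * (2*(x-c)*1)))) x := by
  have h0 : HasDerivAt (fun s : ℝ => s - c) 1 x := (hasDerivAt_id x).sub_const c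
  have h1 : HasDerivAt (fun s : ℝ => (s - c)^2) (2*(x-c)^1*1) x := h0.pow 2
  have h2 : HasDerivAt (fun s : ℝ => K + (s - c)^2) (2*(x-c)^1*1) x := h1.const_add K
  have h3 : HasDerivAt (fun s : ℝ => α * (K + (s - c)^2)) (α * (2*(x-c)^1*1)) x := h2.const_mul α
  have h4 := (h3.neg).exp
  simpa using h4

lemma deriv2_expquad' (α c K : ℝ) (x : ℝ) :
    deriv (deriv (fun s => Real.exp (-(α * (K + (s - c)^2))))) x
      = Real.exp (-(α * (K + (x - c)^2))) * (4*α^2*(x-c)^2 - 2*α) := by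
  rw [funext fun y => (hasDeriv_expquad' α c K y).deriv]
  have h1 := hasDeriv_expquad' α c K x
  have h2 : HasDerivAt (fun s : ℝ => -(α * (2*(s-c)*1))) (-(α * 2)) x := by
    have h0 : HasDerivAt (fun s : ℝ => s - c) 1 x := (hasDerivAt_id x).sub_const c
    have := ((h0.const_mul 2).mul_const 1).const_mul α
    simpa [Pi.neg_def] using this.neg
  have h3 := h1.mul h2
  exact h3.deriv.trans (by ring)

lemma lap2_W (α : ℝ) (c p : ℝ×ℝ) :
    lap2 (fun q => Real.exp (-(α * ((q.1 - c.1)^2 + (q.2 - c.2)^2)))) p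
      = Real.exp (-(α * ((p.1 - c.1)^2 + (p.2 - c.2)^2)))
          * (4*α^2*((p.1-c.1)^2 + (p.2-c.2)^2) - 4*α) := by
  unfold lap2
  rw [deriv2_expquad α c.1 ((p.2 - c.2)^2) p.1, deriv2_expquad' α c.2 ((p.1 - c.1)^2) p.2]
  ring

lemma W_cd (α : ℝ) (c : ℝ×ℝ) :
    ContDiff ℝ 2 (fun q : ℝ×ℝ => Real.exp (-(α * ((q.1 - c.1)^2 + (q.2 - c.2)^2)))) := by
  have h : ContDiff ℝ 2 (fun q : ℝ×ℝ => -(α * ((q.1 - c.1)^2 + (q.2 - c.2)^2))) := by fun_prop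
  exact Real.contDiff_exp.of_le le_top |>.comp h



lemma wmp {Ω : Set (ℝ×ℝ)} (hO : IsOpen Ω) (hb : IsBounded Ω) {w : ℝ×ℝ→ℝ}
    (hc : ContinuousOn w (closure Ω)) (hd : ContDiffOn ℝ 2 w Ω)
    (hsub : ∀ p ∈ Ω, 0 ≤ lap2 w p) (hbd : ∀ p ∈ frontier Ω, w p ≤ 0) :
    ∀ p ∈ closure Ω, w p ≤ 0 := by
  rcases Ω.eq_empty_or_nonempty with hne | hne
  · simp [hne]
  have hKc : IsCompact (closure Ω) := hb.isCompact_closure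
  have hKne : (closure Ω).Nonempty := hne.closure
  have hqcont : Continuous (fun q : ℝ×ℝ => q.1^2 + q.2^2) := by fun_prop
  obtain ⟨pC, hpC, hmaxC⟩ := hKc.exists_isMaxOn hKne hqcont.continuousOn
  set C := pC.1^2 + pC.2^2 with hCdef
  have hC0 : 0 ≤ C := by positivity
  have hqle : ∀ p ∈ closure Ω, p.1^2 + p.2^2 ≤ C := fun p hp => hmaxC hp
  have key : ∀ ε : ℝ, 0 < ε → ∀ p ∈ closure Ω, w p ≤ ε * C := by
    intro ε hε p hp
    set wε := fun q : ℝ×ℝ => w q + ε * (q.1^2 + q.2^2) with hwε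
    have hwεc : ContinuousOn wε (closure Ω) := hc.add (hqcont.continuousOn.const_smul ε)
    obtain ⟨p₀, hp₀K, hp₀max⟩ := hKc.exists_isMaxOn hKne hwεc
    have hp₀f : p₀ ∈ frontier Ω := by
      by_contra hint
      have hp₀Ω : p₀ ∈ Ω := by
        rcases (hO.frontier_eq ▸ hint) with h
        simp only [Set.mem_diff, not_and, not_not] at h
        exact h hp₀K
      have hwat : ContDiffAt ℝ 2 w p₀ := hd.contDiffAt (hO.mem_nhds hp₀Ω)
      have hqat : ContDiffAt ℝ 2 (fun q : ℝ×ℝ => q.1^2 + q.2^2) p₀ := quad_cd.contDiffAt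
      have hWe : ContDiffAt ℝ 2 wε p₀ := hwat.add (hqat.const_smul ε)
      have hploc : IsLocalMax wε p₀ := by
        filter_upwards [hO.mem_nhds hp₀Ω] with q hq
        exact hp₀max (subset_closure hq)
      have hs1 : IsLocalMax (fun s => wε (s, p₀.2)) p₀.1 := by
        have ht : Tendsto (fun s : ℝ => (s, p₀.2)) (nhds p₀.1) (nhds p₀) := by
          have := (continuous_id.prodMk (continuous_const (y := p₀.2))).tendsto p₀.1
          simpa using this
        exact ht.eventually hploc
      have hs2 : IsLocalMax (fun s => wε (p₀.1, s)) p₀.2 := by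
        have ht : Tendsto (fun s : ℝ => (p₀.1, s)) (nhds p₀.2) (nhds p₀) := by
          have := ((continuous_const (y := p₀.1)).prodMk continuous_id).tendsto p₀.2
          simpa using this
        exact ht.eventually hploc
      have d1 := sd_max (slice1_cd hWe) hs1
      have d2 := sd_max (slice2_cd hWe) hs2
      have hle : lap2 wε p₀ ≤ 0 := add_nonpos d1 d2
      have heq : lap2 wε p₀ = lap2 w p₀ + ε * 4 := by
        rw [hwε, lap2_add_smul hwat hqat ε, lap2_quad]
      have := hsub p₀ hp₀Ω
      rw [heq] at hle
      linarith
    have h1 : wε p ≤ wε p₀ := hp₀max hp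
    have h2 : w p₀ ≤ 0 := hbd p₀ hp₀f
    have h3 : p₀.1^2 + p₀.2^2 ≤ C := hqle p₀ hp₀K
    have h4 : 0 ≤ p.1^2 + p.2^2 := by positivity
    simp only [hwε] at h1
    nlinarith
  intro p hp
  by_contra hwp
  push_neg at hwp
  have h5 := key (w p / (2*(C+1))) (by positivity) p hp
  rw [div_mul_eq_mul_div, le_div_iff₀ (by positivity)] at h5
  nlinarith [mul_pos hwp (show (0:ℝ) < C + 2 by linarith)]



def esq (c x : ℝ×ℝ) : ℝ := (x.1 - c.1)^2 + (x.2 - c.2)^2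

lemma lap2_comb {F G : ℝ×ℝ→ℝ} {p : ℝ×ℝ} (hF : ContDiffAt ℝ 2 F p)
    (hG : ContDiffAt ℝ 2 G p) (c₁ c₂ c₃ : ℝ) :
    lap2 (fun q => c₁ * F q + c₂ * G q + c₃) p = c₁ * lap2 F p + c₂ * lap2 G p := by
  unfold lap2
  rw [deriv2_comb (slice1_cd hF) (slice1_cd hG) c₁ c₂ c₃,
      deriv2_comb (slice2_cd hF) (slice2_cd hG) c₁ c₂ c₃]
  ring

set_option maxHeartbeats 2000000 in
lemma smp {Ω : Set (ℝ×ℝ)} (hO : IsOpen Ω) (hconv : Convex ℝ Ω) {h : ℝ×ℝ→ℝ}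
    (hd : ContDiffOn ℝ 2 h Ω) (hnn : ∀ p ∈ Ω, 0 ≤ h p)
    (hsup : ∀ p ∈ Ω, lap2 h p ≤ 0) {q : ℝ×ℝ} (hq : q ∈ Ω) (hqpos : 0 < h q) :
    ∀ p ∈ Ω, 0 < h p := by
  intro p hp
  by_contra hle
  push_neg at hle
  have hp0 : h p = 0 := le_antisymm hle (hnn p hp)
  -- the segment from q to p
  set γ : ℝ → ℝ×ℝ := fun t => q + t • (p - q) with hγ
  have hγcont : Continuous γ := by fun_prop
  have hγmem : ∀ t ∈ Icc (0:ℝ) 1, γ t ∈ Ω := fun t ht => hconv.add_smul_sub_mem hq hp ht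
  have hγ0 : γ 0 = q := by simp [hγ]
  have hγ1 : γ 1 = p := by simp [hγ]
  -- first zero along the segment
  set S : Set ℝ := Icc (0:ℝ) 1 ∩ (fun t => h (γ t)) ⁻¹' {0} with hS
  have hS1 : (1:ℝ) ∈ S := by
    constructor
    · exact ⟨zero_le_one, le_rfl⟩
    · simp [hγ1, hp0]
  have hScl : IsClosed S := by
    apply ContinuousOn.preimage_isClosed_of_isClosed _ isClosed_Icc isClosed_singleton
    exact ((hd.continuousOn).comp hγcont.continuousOn hγmem)
  have hSne : S.Nonempty := ⟨1, hS1⟩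
  have hSbdd : BddBelow S := ⟨0, fun t ht => ht.1.1⟩
  set T := sInf S with hT
  have hTS : T ∈ S := hScl.csInf_mem hSne hSbdd
  have hT0 : 0 < T := by
    rcases lt_or_eq_of_le hTS.1.1 with h' | h'
    · exact h'
    · exfalso
      have : h (γ T) = 0 := hTS.2
      rw [← h', hγ0] at this
      linarith
  have hposIco : ∀ t ∈ Ico (0:ℝ) T, 0 < h (γ t) := by
    intro t ht
    have htIcc : t ∈ Icc (0:ℝ) 1 := ⟨ht.1, le_trans ht.2.le hTS.1.2⟩
    have : t ∉ S := fun hmem => absurd (csInf_le hSbdd hmem) (not_le.mpr ht.2)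
    have hne : h (γ t) ≠ 0 := by
      intro h0
      exact this ⟨htIcc, h0⟩
    exact lt_of_le_of_ne (hnn _ (hγmem t htIcc)) (Ne.symm hne)
  set z := γ T with hz
  have hzΩ : z ∈ Ω := hγmem T ⟨hT0.le, hTS.1.2⟩
  have hz0 : h z = 0 := hTS.2
  obtain ⟨δ, hδ, hball⟩ := Metric.isOpen_iff.mp hO z hzΩ
  -- pick c = γ t₀ close to z with h c > 0
  have hev1 : ∀ᶠ t in nhdsWithin T (Iio T), dist (γ t) z < δ/8 := by
    have h1 : Tendsto γ (nhdsWithin T (Iio T)) (nhds z) :=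
      (hγcont.tendsto T).mono_left nhdsWithin_le_nhds
    exact h1 (Metric.ball_mem_nhds z (by positivity))
  have hev2 : Ioo (0:ℝ) T ∈ nhdsWithin T (Iio T) :=
    Ioo_mem_nhdsLT hT0
  obtain ⟨t₀, ht₀d, ht₀m⟩ := (hev1.and (eventually_of_mem hev2 (fun x hx => hx))).exists
  set c := γ t₀ with hc
  have hcpos : 0 < h c := hposIco t₀ ⟨ht₀m.1.le, ht₀m.2⟩
  have hcz : dist c z < δ/8 := ht₀d
  have hcΩ : c ∈ Ω := hball (Metric.mem_ball.mpr (by linarith))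
  clear_value z c
  -- squared Euclidean distance to c
  set e : ℝ×ℝ → ℝ := esq c with he
  have he_cont : Continuous e := by rw [he]; unfold esq; fun_prop
  have hecz : e z < (δ/4)^2 := by
    have h1 : |z.1 - c.1| < δ/8 := by
      have := le_max_left (dist z.1 c.1) (dist z.2 c.2)
      rw [← Prod.dist_eq] at this
      rw [← Real.dist_eq]
      calc dist z.1 c.1 ≤ dist z c := this
        _ = dist c z := dist_comm _ _
        _ < δ/8 := hcz
    have h2 : |z.2 - c.2| < δ/8 := by
      have := le_max_right (dist z.1 c.1) (dist z.2 c.2)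
      rw [← Prod.dist_eq] at this
      rw [← Real.dist_eq]
      calc dist z.2 c.2 ≤ dist z c := this
        _ = dist c z := dist_comm _ _
        _ < δ/8 := hcz
    have e1 : (z.1 - c.1)^2 < (δ/8)^2 := by nlinarith [abs_nonneg (z.1 - c.1), sq_abs (z.1 - c.1)]
    have e2 : (z.2 - c.2)^2 < (δ/8)^2 := by nlinarith [abs_nonneg (z.2 - c.2), sq_abs (z.2 - c.2)]
    simp only [he, esq]
    nlinarith
  -- the zero set and the touching ball
  set Z : Set (ℝ×ℝ) := {x | x ∈ Ω ∧ h x = 0} with hZ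
  have hzZ : z ∈ Z := ⟨hzΩ, hz0⟩
  set K : Set (ℝ×ℝ) := closure Z ∩ {x | e x ≤ e z} with hK
  have hKcl : IsClosed K := isClosed_closure.inter (isClosed_le he_cont continuous_const)
  have hKcpt : IsCompact K := by
    apply IsCompact.of_isClosed_subset (isCompact_closedBall c (Real.sqrt (e z))) hKcl
    intro x hx
    exact esq_ball hx.2
  have hKne : K.Nonempty := ⟨z, subset_closure hzZ, show e z ≤ e z from le_rfl⟩
  obtain ⟨z', hz'K, hz'min⟩ := hKcpt.exists_isMinOn hKne he_cont.continuousOn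
  have hz'gmin : ∀ x ∈ closure Z, e z' ≤ e x := by
    intro x hx
    by_cases hcase : e x ≤ e z
    · exact hz'min ⟨hx, hcase⟩
    · push_neg at hcase
      calc e z' ≤ e z := hz'min ⟨subset_closure hzZ, show e z ≤ e z from le_rfl⟩
        _ ≤ e x := hcase.le
  set R2 := e z' with hR2
  have hR2z : R2 ≤ e z := hz'min ⟨subset_closure hzZ, show e z ≤ e z from le_rfl⟩
  have hR2δ : R2 < (δ/4)^2 := lt_of_le_of_lt hR2z hecz
  have hcont_at : ∀ x ∈ Ω, ContinuousAt h x := fun x hx =>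
    (hd.continuousOn.continuousAt (hO.mem_nhds hx))
  have hR2pos : 0 < R2 := by
    rcases lt_or_eq_of_le (show (0:ℝ) ≤ R2 by rw [hR2, he]; unfold esq; positivity) with h' | h'
    · exact h'
    · exfalso
      have hz'c : z' = c := by
        have h1 : e z' = 0 := by rw [← hR2]; exact h'.symm
        simp only [he, esq] at h1
        have : z'.1 = c.1 ∧ z'.2 = c.2 := by constructor <;> nlinarith [sq_nonneg (z'.1 - c.1), sq_nonneg (z'.2 - c.2)]
        exact Prod.ext this.1 this.2
      -- c has a neighborhood where h > 0, so c ∉ closure Z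
      have hev : ∀ᶠ x in nhds c, 0 < h x := (hcont_at c hcΩ).eventually (eventually_gt_nhds hcpos)
      have hcnot : c ∉ closure Z := by
        intro hmem
        rw [mem_closure_iff_nhds] at hmem
        obtain ⟨x, hx1, hx2⟩ := hmem _ hev
        exact absurd hx2.2 (ne_of_gt hx1)
      exact hcnot (hz'c ▸ hz'K.1)
  clear_value R2
  clear hγcont hγmem hγ0 hγ1 hS1 hScl hSne hSbdd hTS hT0 hposIco hev1 hev2 ht₀d ht₀m hz hc hγ hS hT S T γ t₀
  -- z' is in Ω and h z' = 0
  have hnear : ∀ x : ℝ×ℝ, e x ≤ R2 → x ∈ Metric.ball z δ := by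
    intro x hx
    simp only [he, esq] at hx
    have h1 : (x.1 - c.1)^2 < (δ/4)^2 := by
      have := sq_nonneg (x.2 - c.2); nlinarith
    have h2 : (x.2 - c.2)^2 < (δ/4)^2 := by
      have := sq_nonneg (x.1 - c.1); nlinarith
    have h1' : |x.1 - c.1| < δ/4 := coord_lt h1 (by positivity)
    have h2' : |x.2 - c.2| < δ/4 := coord_lt h2 (by positivity)
    rw [Metric.mem_ball, Prod.dist_eq]
    have d1 : dist x.1 z.1 < δ := by
      rw [Real.dist_eq]
      have hz1 : |z.1 - c.1| ≤ dist c z := by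
        rw [dist_comm, Prod.dist_eq, Real.dist_eq]; exact le_max_left _ _
      calc |x.1 - z.1| ≤ |x.1 - c.1| + |z.1 - c.1| := by
            have := abs_sub_abs_le_abs_sub (x.1 - c.1) (x.1 - z.1)
            have h3 : x.1 - z.1 = (x.1 - c.1) - (z.1 - c.1) := by ring
            rw [h3]; exact (abs_sub _ _)
        _ < δ/4 + δ/8 := by linarith [lt_of_le_of_lt hz1 hcz]
        _ < δ := by linarith
    have d2 : dist x.2 z.2 < δ := by
      rw [Real.dist_eq]
      have hz2 : |z.2 - c.2| ≤ dist c z := by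
        rw [dist_comm, Prod.dist_eq, Real.dist_eq]; exact le_max_right _ _
      calc |x.2 - z.2| ≤ |x.2 - c.2| + |z.2 - c.2| := by
            have h3 : x.2 - z.2 = (x.2 - c.2) - (z.2 - c.2) := by ring
            rw [h3]; exact (abs_sub _ _)
        _ < δ/4 + δ/8 := by linarith [lt_of_le_of_lt hz2 hcz]
        _ < δ := by linarith
    exact max_lt d1 d2
  have hz'Ω : z' ∈ Ω := hball (hnear z' (le_of_eq hR2.symm))
  have hz'0 : h z' = 0 := by
    obtain ⟨xs, hxs, hxslim⟩ := mem_closure_iff_seq_limit.mp hz'K.1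
    have hlim : Tendsto (fun n => h (xs n)) atTop (nhds (h z')) :=
      ((hcont_at z' hz'Ω).tendsto).comp hxslim
    have : Tendsto (fun n => h (xs n)) atTop (nhds 0) := by
      have : (fun n => h (xs n)) = fun _ => (0:ℝ) := funext fun n => (hxs n).2
      rw [this]; exact tendsto_const_nhds
    exact tendsto_nhds_unique hlim this
  -- h is positive strictly inside the ball
  have hballpos : ∀ x : ℝ×ℝ, e x < R2 → x ∈ Ω ∧ 0 < h x := by
    intro x hx
    have hxΩ : x ∈ Ω := hball (hnear x hx.le)
    refine ⟨hxΩ, ?_⟩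
    have hxnotZ : x ∉ Z := by
      intro hmem
      exact absurd (hz'gmin x (subset_closure hmem)) (not_le.mpr hx)
    have : h x ≠ 0 := fun h0 => hxnotZ ⟨hxΩ, h0⟩
    exact lt_of_le_of_ne (hnn x hxΩ) (Ne.symm this)
  -- barrier setup
  set α : ℝ := 8 / R2 with hα
  have hαpos : 0 < α := by rw [hα]; positivity
  have hαR2 : α * R2 = 8 := by rw [hα]; field_simp
  set E0 : ℝ := Real.exp (-(α * R2)) with hE0
  have hE0pos : 0 < E0 := Real.exp_pos _
  set W : ℝ×ℝ → ℝ := fun x => Real.exp (-(α * ((x.1 - c.1)^2 + (x.2 - c.2)^2))) with hWdef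
  have hWe : ∀ x : ℝ×ℝ, W x = Real.exp (-(α * e x)) := by
    intro x; simp only [hWdef, he, esq]
  have hWcont : Continuous W := by
    apply Real.continuous_exp.comp; fun_prop
  -- inner sphere and its minimum
  set Sin : Set (ℝ×ℝ) := {x | e x = R2/4} with hSin
  have hSinne : Sin.Nonempty := by
    refine ⟨(c.1 + Real.sqrt (R2/4), c.2), ?_⟩
    simp only [hSin, Set.mem_setOf_eq, he, esq]
    rw [show c.1 + Real.sqrt (R2/4) - c.1 = Real.sqrt (R2/4) by ring,
      Real.sq_sqrt (by positivity)]
    ring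
  have hSincl : IsClosed Sin := isClosed_eq he_cont continuous_const
  have hSincpt : IsCompact Sin := by
    apply IsCompact.of_isClosed_subset (isCompact_closedBall c (Real.sqrt (R2/4))) hSincl
    intro x hx
    exact esq_ball (le_of_eq hx)
  have hSinpos : ∀ x ∈ Sin, x ∈ Ω ∧ 0 < h x := by
    intro x hx
    exact hballpos x (by rw [show e x = R2/4 from hx]; linarith)
  obtain ⟨pm, hpm, hpmmin⟩ := hSincpt.exists_isMinOn hSinne
    ((hd.continuousOn).mono (fun x hx => (hSinpos x hx).1))
  set m := h pm with hm
  have hmpos : 0 < m := (hSinpos pm hpm).2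
  -- the annulus
  set A : Set (ℝ×ℝ) := {x | R2/4 < e x ∧ e x < R2} with hA
  have hAopen : IsOpen A := by
    have hAeq : A = e ⁻¹' (Ioo (R2/4) R2) := rfl
    rw [hAeq]
    exact isOpen_Ioo.preimage he_cont
  have hAbded : Bornology.IsBounded A :=
    (Metric.isBounded_closedBall (x := c) (r := Real.sqrt R2)).subset
      (fun x hx => esq_ball hx.2.le)
  have hclA : ∀ x ∈ closure A, R2/4 ≤ e x ∧ e x ≤ R2 := by
    intro x hx
    have hsub : A ⊆ e ⁻¹' (Icc (R2/4) R2) := fun y hy => ⟨hy.1.le, hy.2.le⟩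
    have hcl : IsClosed (e ⁻¹' (Icc (R2/4) R2)) := (isClosed_Icc).preimage he_cont
    exact (closure_minimal hsub hcl) hx
  have hclAΩ : ∀ x ∈ closure A, x ∈ Ω := fun x hx => hball (hnear x (hclA x hx).2)
  have hAsubΩ : A ⊆ Ω := fun x hx => (hballpos x hx.2).1
  -- the comparison function
  set wfun : ℝ×ℝ → ℝ := fun x => m * W x + (-1) * h x + (-(m * E0)) with hwfun
  have hwc : ContinuousOn wfun (closure A) := by
    apply ContinuousOn.add
    apply ContinuousOn.add
    · exact (continuous_const.mul hWcont).continuousOn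
    · exact continuousOn_const.mul (hd.continuousOn.mono hclAΩ)
    · exact continuousOn_const
  have hwd : ContDiffOn ℝ 2 wfun A := by
    apply ContDiffOn.add
    apply ContDiffOn.add
    · exact (contDiff_const.mul (W_cd α c)).contDiffOn
    · exact contDiffOn_const.mul (hd.mono hAsubΩ)
    · exact contDiffOn_const
  have hsubA : ∀ x ∈ A, 0 ≤ lap2 wfun x := by
    intro x hxA
    have hxΩ : x ∈ Ω := hAsubΩ hxA
    have hhx : ContDiffAt ℝ 2 h x := hd.contDiffAt (hO.mem_nhds hxΩ)
    have hWx : ContDiffAt ℝ 2 W x := (W_cd α c).contDiffAt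
    have heq : lap2 wfun x = m * lap2 W x + (-1) * lap2 h x :=
      lap2_comb hWx hhx m (-1) (-(m * E0))
    rw [heq, hWdef, lap2_W α c x]
    have hgt : R2/4 < (x.1 - c.1)^2 + (x.2 - c.2)^2 := by
      have := hxA.1; simpa [he, esq] using this
    have h4 : 0 < 4*α^2*((x.1-c.1)^2 + (x.2-c.2)^2) - 4*α := by
      nlinarith [mul_lt_mul_of_pos_left hgt (mul_pos hαpos hαpos), hαR2, hαpos]
    have hl := hsup x hxΩ
    nlinarith [mul_pos (mul_pos hmpos
      (Real.exp_pos (-(α * ((x.1 - c.1)^2 + (x.2 - c.2)^2))))) h4]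
  have hbdA : ∀ x ∈ frontier A, wfun x ≤ 0 := by
    intro x hxf
    have hxcl : x ∈ closure A := frontier_subset_closure hxf
    have hxΩ : x ∈ Ω := hclAΩ x hxcl
    have hxI := hclA x hxcl
    have hxnotA : x ∉ A := by
      have := hxf.2
      rwa [hAopen.interior_eq] at this
    have hcases : e x = R2/4 ∨ e x = R2 := by
      by_contra hcon
      push_neg at hcon
      exact hxnotA ⟨lt_of_le_of_ne hxI.1 (Ne.symm hcon.1), lt_of_le_of_ne hxI.2 hcon.2⟩
    rcases hcases with hcase | hcase
    · have hxSin : x ∈ Sin := hcase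
      have hge : m ≤ h x := hpmmin hxSin
      have hWle : W x ≤ 1 := by
        rw [hWe x, Real.exp_le_one_iff, hcase]
        nlinarith [hαpos, hR2pos]
      simp only [hwfun]
      nlinarith [hmpos, hE0pos]
    · have hWeq : W x = E0 := by rw [hWe x, hcase, hE0]
      simp only [hwfun, hWeq]
      have := hnn x hxΩ
      nlinarith
  have hcomp := wmp hAopen hAbded hwc hwd hsubA hbdA
  -- the ray from z' toward c
  set xline : ℝ → ℝ×ℝ := fun t => (z'.1 + t * (c.1 - z'.1), z'.2 + t * (c.2 - z'.2)) with hxline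
  have hxl0 : xline 0 = z' := by simp [hxline]
  have hxlcont : Continuous xline := by fun_prop
  have hexline : ∀ t : ℝ, e (xline t) = (1 - t)^2 * R2 := by
    intro t
    have : R2 = (z'.1 - c.1)^2 + (z'.2 - c.2)^2 := by rw [hR2]; simp [he, esq]
    simp only [he, esq, hxline, this]
    ring
  have hmemA : ∀ t ∈ Ioo (0:ℝ) (1/2:ℝ), xline t ∈ A := by
    intro t ht
    have h1 := ht.1
    have h2 := ht.2
    constructor
    · show R2/4 < e (xline t)
      rw [hexline t]; nlinarith
    · show e (xline t) < R2
      rw [hexline t]; nlinarith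
  set η₁ : ℝ → ℝ := fun t => h (xline t) with hη₁def
  have hdh : DifferentiableAt ℝ h z' :=
    (hd.contDiffAt (hO.mem_nhds hz'Ω)).differentiableAt (by norm_num)
  have hdx1 : HasDerivAt (fun t : ℝ => z'.1 + t * (c.1 - z'.1)) (c.1 - z'.1) 0 := by
    simpa using ((hasDerivAt_id (0:ℝ)).mul_const (c.1 - z'.1)).const_add z'.1
  have hdx2 : HasDerivAt (fun t : ℝ => z'.2 + t * (c.2 - z'.2)) (c.2 - z'.2) 0 := by
    simpa using ((hasDerivAt_id (0:ℝ)).mul_const (c.2 - z'.2)).const_add z'.2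
  have hdx : HasDerivAt xline (c.1 - z'.1, c.2 - z'.2) 0 := hdx1.prodMk hdx2
  have hη₁diff : DifferentiableAt ℝ η₁ 0 := by
    have := (hxl0 ▸ hdh).comp 0 hdx.differentiableAt
    exact this
  have hη₁min : IsLocalMin η₁ 0 := by
    have hevΩ : ∀ᶠ t in nhds 0, xline t ∈ Ω := by
      have ht : Tendsto xline (nhds 0) (nhds z') := by
        rw [← hxl0]; exact hxlcont.tendsto 0
      exact ht (hO.mem_nhds hz'Ω)
    filter_upwards [hevΩ] with t ht
    have h10 : η₁ 0 = 0 := by simp only [hη₁def, hxl0, hz'0]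
    rw [h10]
    exact hnn _ ht
  have hη₁has : HasDerivAt η₁ 0 0 := by
    have := hη₁diff.hasDerivAt
    rwa [hη₁min.deriv_eq_zero] at this
  set η₂ : ℝ → ℝ := fun t => Real.exp (-(α * ((1 - t)^2 * R2))) - E0 with hη₂def
  have hη₂has : HasDerivAt η₂ (E0 * (2 * α * R2)) 0 := by
    have hin : HasDerivAt (fun t : ℝ => 1 - t) (-1) 0 := (hasDerivAt_id (0:ℝ)).const_sub 1
    have hin2 : HasDerivAt (fun t : ℝ => (1 - t)^2) (2*(1-(0:ℝ))^1*(-1)) 0 := hin.pow 2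
    have hin6 := (((hin2.mul_const R2).const_mul α).neg).exp.sub_const E0
    simp only [Pi.neg_apply] at hin6
    refine hin6.congr_deriv ?_
    rw [hE0]
    norm_num
    ring
  set η : ℝ → ℝ := fun t => η₁ t - m * η₂ t with hηdef
  have hηhas : HasDerivAt η (0 - m * (E0 * (2 * α * R2))) 0 := hη₁has.sub (hη₂has.const_mul m)
  have hDneg : 0 - m * (E0 * (2 * α * R2)) < 0 := by
    have h1 : 0 < m * (E0 * (2 * α * R2)) :=
      mul_pos hmpos (mul_pos hE0pos (mul_pos (mul_pos (by norm_num : (0:ℝ) < 2) hαpos) hR2pos))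
    linarith
  have hηnn : ∀ t ∈ Ioo (0:ℝ) (1/2:ℝ), 0 ≤ η t := by
    intro t ht
    have hmem := hmemA t ht
    have hwle := hcomp (xline t) (subset_closure hmem)
    have hWt : W (xline t) = Real.exp (-(α * ((1-t)^2 * R2))) := by
      rw [hWe (xline t), hexline t]
    simp only [hwfun, hWt] at hwle
    simp only [hηdef, hη₁def, hη₂def]
    linarith
  have hη0 : η 0 = 0 := by
    have h10 : η₁ 0 = 0 := by simp only [hη₁def, hxl0, hz'0]
    have h20 : η₂ 0 = 0 := by
      simp only [hη₂def, hE0]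
      norm_num
    simp only [hηdef, h10, h20]
    ring
  have hslope := hasDerivAt_iff_tendsto_slope.mp hηhas
  have hmono : nhdsWithin (0:ℝ) (Ioi 0) ≤ nhdsWithin (0:ℝ) {(0:ℝ)}ᶜ :=
    nhdsWithin_mono 0 (fun t ht => ne_of_gt ht)
  have hev1 : ∀ᶠ t in nhdsWithin (0:ℝ) (Ioi 0), slope η 0 t < 0 :=
    (hslope.mono_left hmono).eventually (Iio_mem_nhds hDneg)
  have hev2 : Ioo (0:ℝ) (1/2:ℝ) ∈ nhdsWithin (0:ℝ) (Ioi 0) :=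
    Ioo_mem_nhdsGT (by norm_num)
  obtain ⟨t, hts, htm⟩ := (hev1.and (eventually_of_mem hev2 (fun x hx => hx))).exists
  rw [slope_def_field, hη0, sub_zero, sub_zero] at hts
  have hηt := hηnn t htm
  have htpos : 0 < t := htm.1
  rcases div_neg_iff.mp hts with ⟨ha, hb⟩ | ⟨ha, hb⟩
  · linarith
  · linarith




lemma combo_lt {x1 x2 b1 b2 s t : ℝ} (h1 : x1 < b1) (h2 : x2 < b2) (hs : 0 ≤ s)
    (ht : 0 ≤ t) (hst : s + t = 1) : s*x1 + t*x2 < s*b1 + t*b2 := by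
  rcases eq_or_lt_of_le hs with hs' | hs'
  · rw [← hs']
    have ht1 : t = 1 := by linarith
    rw [ht1]
    simpa using h2
  · have e1 : s*x1 < s*b1 := by nlinarith
    have e2 : t*x2 ≤ t*b2 := by nlinarith
    linarith

lemma stadium_isOpen {φ : ℝ → ℝ} {a : ℝ} (hφc : ContinuousOn φ (Set.Icc (-1) 1)) :
    IsOpen (stadium φ a) := by
  set T : Set (ℝ×ℝ) := univ ×ˢ Ioo (-1:ℝ) 1 with hT
  have hTo : IsOpen T := isOpen_univ.prod isOpen_Ioo
  have hφT : ContinuousOn (fun p : ℝ×ℝ => φ p.2) T := by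
    apply hφc.comp continuous_snd.continuousOn
    intro p hp
    exact Ioo_subset_Icc_self hp.2
  have hf : ContinuousOn (fun p : ℝ×ℝ => (p.1 + a + φ p.2, a + φ p.2 - p.1)) T := by
    apply ContinuousOn.prodMk
    · exact (continuous_fst.continuousOn.add continuousOn_const).add hφT
    · exact (continuousOn_const.add hφT).sub continuous_fst.continuousOn
  have key := hf.isOpen_inter_preimage hTo (isOpen_Ioi.prod isOpen_Ioi : IsOpen (Ioi (0:ℝ) ×ˢ Ioi (0:ℝ)))
  have heq : stadium φ a = T ∩ (fun p : ℝ×ℝ => (p.1 + a + φ p.2, a + φ p.2 - p.1)) ⁻¹'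
      (Ioi (0:ℝ) ×ˢ Ioi (0:ℝ)) := by
    ext p
    simp only [stadium, Set.mem_setOf_eq, Set.mem_inter_iff, Set.mem_preimage, hT,
      Set.mem_prod, Set.mem_univ, Set.mem_Ioo, Set.mem_Ioi, true_and]
    constructor
    · rintro ⟨h1, h2, h3, h4⟩
      exact ⟨⟨h3, h4⟩, by linarith, by linarith⟩
    · rintro ⟨⟨h3, h4⟩, h1, h2⟩
      exact ⟨by linarith, by linarith, h3, h4⟩
  rw [heq]
  exact key

lemma stadium_bounded {φ : ℝ → ℝ} {a : ℝ} (hφc : ContinuousOn φ (Set.Icc (-1) 1)) :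
    IsBounded (stadium φ a) := by
  obtain ⟨y0, hy0m, hy0⟩ := isCompact_Icc.exists_isMaxOn (nonempty_Icc.mpr (by norm_num)) hφc
  set M := φ y0 with hM
  have hsub : stadium φ a ⊆ Icc (-(a+M)) (a+M) ×ˢ Icc (-1:ℝ) 1 := by
    intro p hp
    obtain ⟨h1, h2, h3, h4⟩ := hp
    have hpM : φ p.2 ≤ M := hy0 ⟨h3.le, h4.le⟩
    exact ⟨⟨by linarith, by linarith⟩, h3.le, h4.le⟩
  exact ((Metric.isBounded_Icc _ _).prod (Metric.isBounded_Icc _ _)).subset hsub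

lemma stadium_convex {φ : ℝ → ℝ} {a : ℝ} (hφcc : ConcaveOn ℝ (Set.Icc (-1:ℝ) 1) φ) :
    Convex ℝ (stadium φ a) := by
  intro p hp q hq s t hs ht hst
  obtain ⟨hp1, hp2, hp3, hp4⟩ := hp
  obtain ⟨hq1, hq2, hq3, hq4⟩ := hq
  have hcc := hφcc.2 (⟨hp3.le, hp4.le⟩ : p.2 ∈ Icc (-1:ℝ) 1) (⟨hq3.le, hq4.le⟩ : q.2 ∈ Icc (-1:ℝ) 1) hs ht hst
  simp only [smul_eq_mul] at hcc
  refine ⟨?_, ?_, ?_, ?_⟩ <;>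
    simp only [Prod.fst_add, Prod.snd_add, Prod.smul_fst, Prod.smul_snd, smul_eq_mul]
  · have h5 := combo_lt hp1 hq1 hs ht hst
    have ha : s*a + t*a = a := by rw [← add_mul, hst, one_mul]
    nlinarith
  · have h5 := combo_lt hp2 hq2 hs ht hst
    have ha : s*a + t*a = a := by rw [← add_mul, hst, one_mul]
    nlinarith
  · have := combo_lt (show (-1:ℝ) < p.2 from hp3) (show (-1:ℝ) < q.2 from hq3) hs ht hst
    nlinarith
  · have := combo_lt hp4 hq4 hs ht hst
    nlinarith
set_option maxHeartbeats 2000000 in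
theorem stmt12 (φ : ℝ → ℝ)
    (hφc : ContinuousOn φ (Set.Icc (-1) 1)) (hφ0 : ∀ y ∈ Set.Icc (-1:ℝ) 1, 0 ≤ φ y)
    (hφcc : ConcaveOn ℝ (Set.Icc (-1:ℝ) 1) φ) (hφe : ∀ y : ℝ, φ (-y) = φ y)
    (hφm1 : φ (-1) = 0) (hφ1 : φ 1 = 0)
    (g : ℝ → ℝ) (hgsm : ContDiff ℝ (⊤ : ℕ∞) g) (hgrange : ∀ s : ℝ, g s ∈ Set.Icc (0:ℝ) 1)
    (hg0 : ∀ s : ℝ, s ≤ 1 → g s = 0) (hg1 : ∀ s : ℝ, 2 ≤ s → g s = 1)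
    (hg' : ∀ s : ℝ, 0 ≤ deriv g s)
    (a : ℝ) (ha : 1 ≤ a) (μ : ℝ) (u v : ℝ × ℝ → ℝ)
    (hvc : ContinuousOn v (closure (stadium φ a)))
    (hvd : ContDiffOn ℝ 2 v (stadium φ a))
    (hveq : ∀ p ∈ stadium φ a, lap2 v p + 1 = 0)
    (huc : ContinuousOn u (closure (stadium φ a)))
    (hud : ContDiffOn ℝ 2 u (stadium φ a))
    (hueq : ∀ p ∈ stadium φ a, lap2 u p + 1 + μ * deriv g (u p) = 0)
    (hubc : ∀ p ∈ frontier (stadium φ a), u p = 0)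
    (hvbc : ∀ p ∈ frontier (stadium φ a), v p = 0)
    (hmax : ∃ p ∈ closure (stadium φ a), 1 < u p) :
    0 < μ ∧ ∀ p ∈ stadium φ a, 0 < v p ∧ v p < u p := by
  have hOopen : IsOpen (stadium φ a) := stadium_isOpen hφc
  have hObd : Bornology.IsBounded (stadium φ a) := stadium_bounded hφc
  have hOconv : Convex ℝ (stadium φ a) := stadium_convex hφcc
  have hstrip : closure (stadium φ a) ⊆ {p : ℝ×ℝ | -1 ≤ p.2 ∧ p.2 ≤ 1} := by
    apply closure_minimal
    · intro p hp
      exact ⟨hp.2.2.1.le, hp.2.2.2.le⟩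
    · exact IsClosed.inter (isClosed_le continuous_const continuous_snd)
        (isClosed_le continuous_snd continuous_const)
  have hbnn : ∀ p ∈ closure (stadium φ a), 0 ≤ (1 - p.2^2)/2 := by
    intro p hp
    have h2 := hstrip hp
    nlinarith [h2.1, h2.2]
  have hble : ∀ p : ℝ×ℝ, (1 - p.2^2)/2 ≤ 1/2 := fun p => by nlinarith [sq_nonneg p.2]
  -- the max point of u is interior
  obtain ⟨pstar, hpst, hpstu⟩ := hmax
  have hpstΩ : pstar ∈ stadium φ a := by
    by_contra hns
    have hfr : pstar ∈ frontier (stadium φ a) := by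
      rw [hOopen.frontier_eq]
      exact ⟨hpst, hns⟩
    have := hubc pstar hfr
    linarith
  -- lap2 values
  have hlapv : ∀ p ∈ stadium φ a, lap2 v p = -1 := by
    intro p hp
    have := hveq p hp
    linarith
  have hlapu : ∀ p ∈ stadium φ a, lap2 u p = -1 - μ * deriv g (u p) := by
    intro p hp
    have := hueq p hp
    linarith
  -- Step A : v ≤ barrier on the closure
  have hvb : ∀ p ∈ closure (stadium φ a), v p ≤ (1 - p.2^2)/2 := by
    have hc1 : ContinuousOn (fun q : ℝ×ℝ => 1 * v q + (-1) * ((1 - q.2^2)/2) + 0)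
        (closure (stadium φ a)) := by
      apply ContinuousOn.add
      apply ContinuousOn.add
      · exact continuousOn_const.mul hvc
      · exact continuousOn_const.mul (barrier_cd.continuous.continuousOn)
      · exact continuousOn_const
    have hd1 : ContDiffOn ℝ 2 (fun q : ℝ×ℝ => 1 * v q + (-1) * ((1 - q.2^2)/2) + 0)
        (stadium φ a) := by
      apply ContDiffOn.add
      apply ContDiffOn.add
      · exact contDiffOn_const.mul hvd
      · exact contDiffOn_const.mul barrier_cd.contDiffOn
      · exact contDiffOn_const
    have hs1 : ∀ p ∈ stadium φ a,
        0 ≤ lap2 (fun q : ℝ×ℝ => 1 * v q + (-1) * ((1 - q.2^2)/2) + 0) p := by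
      intro p hp
      have hvp : ContDiffAt ℝ 2 v p := hvd.contDiffAt (hOopen.mem_nhds hp)
      have hbp : ContDiffAt ℝ 2 (fun q : ℝ×ℝ => (1 - q.2^2)/2) p := barrier_cd.contDiffAt
      rw [lap2_comb hvp hbp 1 (-1) 0, lap2_barrier_s12 p, hlapv p hp]
      norm_num
    have hbd1 : ∀ p ∈ frontier (stadium φ a),
        (fun q : ℝ×ℝ => 1 * v q + (-1) * ((1 - q.2^2)/2) + 0) p ≤ 0 := by
      intro p hp
      have h0 := hvbc p hp
      have hb0 := hbnn p (frontier_subset_closure hp)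
      simp only [h0]
      linarith
    have key := wmp hOopen hObd hc1 hd1 hs1 hbd1
    intro p hp
    have := key p hp
    linarith
  -- Step B : 0 ≤ v on the closure
  have hv0 : ∀ p ∈ closure (stadium φ a), 0 ≤ v p := by
    have hc1 : ContinuousOn (fun q : ℝ×ℝ => (-1) * v q + 0 * v q + 0)
        (closure (stadium φ a)) := by
      apply ContinuousOn.add
      apply ContinuousOn.add
      · exact continuousOn_const.mul hvc
      · exact continuousOn_const.mul hvc
      · exact continuousOn_const
    have hd1 : ContDiffOn ℝ 2 (fun q : ℝ×ℝ => (-1) * v q + 0 * v q + 0) (stadium φ a) := by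
      apply ContDiffOn.add
      apply ContDiffOn.add
      · exact contDiffOn_const.mul hvd
      · exact contDiffOn_const.mul hvd
      · exact contDiffOn_const
    have hs1 : ∀ p ∈ stadium φ a,
        0 ≤ lap2 (fun q : ℝ×ℝ => (-1) * v q + 0 * v q + 0) p := by
      intro p hp
      have hvp : ContDiffAt ℝ 2 v p := hvd.contDiffAt (hOopen.mem_nhds hp)
      rw [lap2_comb hvp hvp (-1) 0 0, hlapv p hp]
      norm_num
    have hbd1 : ∀ p ∈ frontier (stadium φ a),
        (fun q : ℝ×ℝ => (-1) * v q + 0 * v q + 0) p ≤ 0 := by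
      intro p hp
      have h0 := hvbc p hp
      simp only [h0]
      norm_num
    have key := wmp hOopen hObd hc1 hd1 hs1 hbd1
    intro p hp
    have := key p hp
    linarith
  -- Step C : μ > 0
  have hμpos : 0 < μ := by
    by_contra hμ
    push_neg at hμ
    have hc1 : ContinuousOn (fun q : ℝ×ℝ => 1 * u q + (-1) * ((1 - q.2^2)/2) + 0)
        (closure (stadium φ a)) := by
      apply ContinuousOn.add
      apply ContinuousOn.add
      · exact continuousOn_const.mul huc
      · exact continuousOn_const.mul (barrier_cd.continuous.continuousOn)
      · exact continuousOn_const
    have hd1 : ContDiffOn ℝ 2 (fun q : ℝ×ℝ => 1 * u q + (-1) * ((1 - q.2^2)/2) + 0)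
        (stadium φ a) := by
      apply ContDiffOn.add
      apply ContDiffOn.add
      · exact contDiffOn_const.mul hud
      · exact contDiffOn_const.mul barrier_cd.contDiffOn
      · exact contDiffOn_const
    have hs1 : ∀ p ∈ stadium φ a,
        0 ≤ lap2 (fun q : ℝ×ℝ => 1 * u q + (-1) * ((1 - q.2^2)/2) + 0) p := by
      intro p hp
      have hup : ContDiffAt ℝ 2 u p := hud.contDiffAt (hOopen.mem_nhds hp)
      have hbp : ContDiffAt ℝ 2 (fun q : ℝ×ℝ => (1 - q.2^2)/2) p := barrier_cd.contDiffAt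
      rw [lap2_comb hup hbp 1 (-1) 0, lap2_barrier_s12 p, hlapu p hp]
      have := mul_nonneg (neg_nonneg.mpr hμ) (hg' (u p))
      nlinarith
    have hbd1 : ∀ p ∈ frontier (stadium φ a),
        (fun q : ℝ×ℝ => 1 * u q + (-1) * ((1 - q.2^2)/2) + 0) p ≤ 0 := by
      intro p hp
      have h0 := hubc p hp
      have hb0 := hbnn p (frontier_subset_closure hp)
      simp only [h0]
      linarith
    have key := wmp hOopen hObd hc1 hd1 hs1 hbd1
    have hk := key pstar hpst
    have := hble pstar
    linarith
  -- Step D : v ≤ u on the closure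
  have hvu : ∀ p ∈ closure (stadium φ a), v p ≤ u p := by
    have hc1 : ContinuousOn (fun q : ℝ×ℝ => 1 * v q + (-1) * u q + 0)
        (closure (stadium φ a)) := by
      apply ContinuousOn.add
      apply ContinuousOn.add
      · exact continuousOn_const.mul hvc
      · exact continuousOn_const.mul huc
      · exact continuousOn_const
    have hd1 : ContDiffOn ℝ 2 (fun q : ℝ×ℝ => 1 * v q + (-1) * u q + 0) (stadium φ a) := by
      apply ContDiffOn.add
      apply ContDiffOn.add
      · exact contDiffOn_const.mul hvd
      · exact contDiffOn_const.mul hud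
      · exact contDiffOn_const
    have hs1 : ∀ p ∈ stadium φ a,
        0 ≤ lap2 (fun q : ℝ×ℝ => 1 * v q + (-1) * u q + 0) p := by
      intro p hp
      have hvp : ContDiffAt ℝ 2 v p := hvd.contDiffAt (hOopen.mem_nhds hp)
      have hup : ContDiffAt ℝ 2 u p := hud.contDiffAt (hOopen.mem_nhds hp)
      rw [lap2_comb hvp hup 1 (-1) 0, hlapv p hp, hlapu p hp]
      have := mul_nonneg hμpos.le (hg' (u p))
      nlinarith
    have hbd1 : ∀ p ∈ frontier (stadium φ a),
        (fun q : ℝ×ℝ => 1 * v q + (-1) * u q + 0) p ≤ 0 := by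
      intro p hp
      simp only [hvbc p hp, hubc p hp]
      norm_num
    have key := wmp hOopen hObd hc1 hd1 hs1 hbd1
    intro p hp
    have := key p hp
    linarith
  -- Step E : v > 0 inside
  have hvpos : ∀ p ∈ stadium φ a, 0 < v p := by
    intro p hp
    by_contra h'
    push_neg at h'
    have hvp0 : v p = 0 := le_antisymm h' (hv0 p (subset_closure hp))
    have hlocmin : IsLocalMin v p := by
      filter_upwards [hOopen.mem_nhds hp] with x hx
      rw [hvp0]
      exact hv0 x (subset_closure hx)
    have hvp : ContDiffAt ℝ 2 v p := hvd.contDiffAt (hOopen.mem_nhds hp)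
    have hs1 : IsLocalMin (fun s => v (s, p.2)) p.1 := by
      have ht : Filter.Tendsto (fun s : ℝ => (s, p.2)) (nhds p.1) (nhds p) := by
        have := (continuous_id.prodMk (continuous_const (y := p.2))).tendsto p.1
        simpa using this
      exact ht.eventually hlocmin
    have hs2 : IsLocalMin (fun s => v (p.1, s)) p.2 := by
      have ht : Filter.Tendsto (fun s : ℝ => (p.1, s)) (nhds p.2) (nhds p) := by
        have := ((continuous_const (y := p.1)).prodMk continuous_id).tendsto p.2
        simpa using this
      exact ht.eventually hlocmin
    have d1 := sd_min (slice1_cd hvp) hs1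
    have d2 := sd_min (slice2_cd hvp) hs2
    have hge : 0 ≤ lap2 v p := add_nonneg d1 d2
    rw [hlapv p hp] at hge
    linarith
  -- Step F : u > v inside, via the strong minimum principle
  have hsmp : ∀ p ∈ stadium φ a, 0 < 1 * u p + (-1) * v p + 0 := by
    have hd1 : ContDiffOn ℝ 2 (fun q : ℝ×ℝ => 1 * u q + (-1) * v q + 0) (stadium φ a) := by
      apply ContDiffOn.add
      apply ContDiffOn.add
      · exact contDiffOn_const.mul hud
      · exact contDiffOn_const.mul hvd
      · exact contDiffOn_const
    have hnn : ∀ p ∈ stadium φ a, 0 ≤ 1 * u p + (-1) * v p + 0 := by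
      intro p hp
      have := hvu p (subset_closure hp)
      linarith
    have hsup : ∀ p ∈ stadium φ a, lap2 (fun q : ℝ×ℝ => 1 * u q + (-1) * v q + 0) p ≤ 0 := by
      intro p hp
      have hvp : ContDiffAt ℝ 2 v p := hvd.contDiffAt (hOopen.mem_nhds hp)
      have hup : ContDiffAt ℝ 2 u p := hud.contDiffAt (hOopen.mem_nhds hp)
      rw [lap2_comb hup hvp 1 (-1) 0, hlapv p hp, hlapu p hp]
      have := mul_nonneg hμpos.le (hg' (u p))
      nlinarith
    have hqpos : 0 < 1 * u pstar + (-1) * v pstar + 0 := by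
      have h1 := hvb pstar (subset_closure hpstΩ)
      have h2 := hble pstar
      linarith
    exact smp hOopen hOconv hd1 hnn hsup hpstΩ hqpos
  refine ⟨hμpos, fun p hp => ⟨hvpos p hp, ?_⟩⟩
  have := hsmp p hp
  linarith
end
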